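/- Let Σ be a nonempty finite type and P : Set (ℕ → Σ) a boolean property. Then (P is safe and P is co-safe) if and only if there exists a function v : List Σ → Option Bool such that: (monotonicity) for all finite traces s, t with s a prefix of t and all b : Bool, v s = some b implies v t = some b; and (universal convergence) for every infinite trace f there exists n : ℕ with v (f↾n) = some (decide (f ∈ P)). -/
import Mathlib


/-- The length-`n` prefix of an infinite trace `f`. -/
def pref {A : Type*} (f : ℕ → A) (n : ℕ) : List A := List.ofFn (fun i : Fin n => f i.1)

/-- The infinite trace obtained by prepending the finite trace `s` to the infinite trace `f`. -/
def ext {A : Type*} (s : List A) (f : ℕ → A) : ℕ → A :=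
  fun n => if h : n < s.length then s.get ⟨n, h⟩ else f (n - s.length)

/-- `s` positively determines `P`. -/
def PosDet {A : Type*} (P : Set (ℕ → A)) (s : List A) : Prop := ∀ f : ℕ → A, ext s f ∈ P

/-- `s` negatively determines `P`. -/
def NegDet {A : Type*} (P : Set (ℕ → A)) (s : List A) : Prop := ∀ f : ℕ → A, ext s f ∉ P

/-- `P` is a safety property. -/
def Safe {A : Type*} (P : Set (ℕ → A)) : Prop :=
  ∀ f : ℕ → A, f ∉ P → ∃ n : ℕ, NegDet P (pref f n)

/-- `P` is a co-safety property. -/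
def CoSafe {A : Type*} (P : Set (ℕ → A)) : Prop :=
  ∀ f : ℕ → A, f ∈ P → ∃ n : ℕ, PosDet P (pref f n)

attribute [local instance] Classical.propDecidable

lemma ext_append {A : Type*} (s u : List A) (f : ℕ → A) :
    ext (s ++ u) f = ext s (ext u f) := by
  funext n
  simp only [ext, List.length_append]
  by_cases h1 : n < s.length
  · rw [dif_pos (by omega), dif_pos h1]
    simp [List.getElem_append, h1]
  · rw [dif_neg h1]
    by_cases h2 : n < s.length + u.length
    · rw [dif_pos h2, dif_pos (by omega)]
      simp only [List.get_eq_getElem]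
      rw [List.getElem_append_right (by omega)]
    · rw [dif_neg h2, dif_neg (by omega)]
      congr 1
      omega

lemma pref_ext {A : Type*} (s : List A) (g : ℕ → A) : pref (ext s g) s.length = s := by
  apply List.ext_getElem
  · simp [pref]
  · intro i h1 h2
    simp only [pref, List.getElem_ofFn, ext]
    rw [dif_pos]
    · simp
    · simpa [pref] using h1

lemma pref_prefix {A : Type*} (f : ℕ → A) {n m : ℕ} (h : n ≤ m) :
    pref f n <+: pref f m := by
  refine ⟨List.ofFn (fun i : Fin (m - n) => f (n + i.1)), ?_⟩
  apply List.ext_getElem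
  · simp [pref]; omega
  · intro i h1 h2
    simp only [pref, List.length_ofFn] at h2 ⊢
    rcases lt_or_ge i n with hi | hi
    · rw [List.getElem_append_left (by simpa using hi)]
      simp
    · rw [List.getElem_append_right (by simpa using hi)]
      simp only [List.getElem_ofFn, List.length_ofFn]
      congr 1
      omega

lemma negDet_not_posDet {A : Type*} [Nonempty A] {P : Set (ℕ → A)} {s : List A}
    (h : NegDet P s) : ¬ PosDet P s := by
  intro hp
  obtain ⟨a⟩ := ‹Nonempty A›
  exact h (fun _ => a) (hp (fun _ => a))

theorem safe_and_cosafe_iff_verdict {A : Type*} [Fintype A] [Nonempty A]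
    (P : Set (ℕ → A)) :
    (Safe P ∧ CoSafe P) ↔
    (∃ v : List A → Option Bool,
      (∀ s t : List A, s <+: t → ∀ b : Bool, v s = some b → v t = some b) ∧
      ∀ f : ℕ → A, ∃ n : ℕ, v (pref f n) = some (decide (f ∈ P))) := by
  constructor
  · rintro ⟨hS, hC⟩
    refine ⟨fun s => if PosDet P s then some true else if NegDet P s then some false else none,
      ?_, ?_⟩
    · rintro s t ⟨u, rfl⟩ b hb
      by_cases hp : PosDet P s
      · simp only [if_pos hp] at hb
        have hpt : PosDet P (s ++ u) := by
          intro f; rw [ext_append]; exact hp _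
        simp [if_pos hpt, ← hb]
      · simp only [if_neg hp] at hb
        by_cases hn : NegDet P s
        · simp only [if_pos hn] at hb
          have hnt : NegDet P (s ++ u) := by
            intro f; rw [ext_append]; exact hn _
          simp [if_neg (negDet_not_posDet hnt), if_pos hnt, ← hb]
        · simp [if_neg hn] at hb
    · intro f
      by_cases hf : f ∈ P
      · obtain ⟨n, hn⟩ := hC f hf
        exact ⟨n, by simp [if_pos hn, hf]⟩
      · obtain ⟨n, hn⟩ := hS f hf
        exact ⟨n, by simp [if_neg (negDet_not_posDet hn), if_pos hn, hf]⟩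
  · rintro ⟨v, hmono, hconv⟩
    have key : ∀ (f : ℕ → A) (n : ℕ) (b : Bool), v (pref f n) = some b →
        (f ∈ P ↔ b = true) := by
      intro f n b hb
      obtain ⟨m, hm⟩ := hconv f
      rcases le_total n m with h | h
      · have := hmono _ _ (pref_prefix f h) b hb
        rw [hm] at this
        simp only [Option.some.injEq] at this
        constructor
        · intro hf; rw [← this]; simp [hf]
        · intro hbt; rw [hbt] at this; exact of_decide_eq_true this
      · have := hmono _ _ (pref_prefix f h) _ hm
        rw [hb] at this
        simp only [Option.some.injEq] at this
        constructor
        · intro hf; rw [this]; simp [hf]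
        · intro hbt; rw [hbt] at this; exact of_decide_eq_true this.symm
    constructor
    · intro f hf
      obtain ⟨n, hn⟩ := hconv f
      refine ⟨n, fun g hg => ?_⟩
      have hp : pref (ext (pref f n) g) (pref f n).length = pref f n := pref_ext _ _
      have := key (ext (pref f n) g) (pref f n).length false (by rw [hp, hn]; simp [hf])
      simp at this
      exact this hg
    · intro f hf
      obtain ⟨n, hn⟩ := hconv f
      refine ⟨n, fun g => ?_⟩
      have hp : pref (ext (pref f n) g) (pref f n).length = pref f n := pref_ext _ _
      have := key (ext (pref f n) g) (pref f n).length true (by rw [hp, hn]; simp [hf])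
      simp at this
      exact this
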